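/- In LR-Subtraction Nim with any removable set S ⊆ ℤ≥2, if O_S(n) = R then O_S(n-1) = O_S(n+1) = L (whenever n-1 ≥ 0). -/
import Mathlib


open scoped Classical

inductive Outcome : Type
  | L | R | N | P
deriving DecidableEq

/-- Outcome determined from the set of outcomes of the options of a non-terminal position. -/
noncomputable def fromOptions (T : Set Outcome) : Outcome :=
  if Outcome.L ∈ T ∧ T ⊆ {Outcome.L, Outcome.N} then Outcome.L
  else if Outcome.R ∈ T ∧ T ⊆ {Outcome.R, Outcome.N} then Outcome.R
  else if T = {Outcome.N} then Outcome.P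
  else Outcome.N

/-- Outcome of Ending Partizan Subtraction Nim with removable set `S ⊆ ℤ≥2` and
terminal assignment `W`. -/
noncomputable def epOutcome (S : Set ℕ) (hS : ∀ s ∈ S, 2 ≤ s) (W : ℕ → Outcome) : ℕ → Outcome :=
  fun n => Nat.strongRecOn n (fun n ih =>
    if ∃ s ∈ S, s ≤ n then
      fromOptions {o | ∃ s, ∃ hs : s ∈ S, ∃ hsn : s ≤ n,
        o = ih (n - s) (by have := hS s hs; omega)}
    else W n)

/-- Outcome of `LR`-Subtraction Nim: at a terminal position, Left wins if the number of
remaining tokens is even, Right wins if it is odd. -/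
noncomputable def lrOutcome (S : Set ℕ) (hS : ∀ s ∈ S, 2 ≤ s) : ℕ → Outcome :=
  epOutcome S hS (fun n => if Even n then Outcome.L else Outcome.R)

def OA (o : Outcome) : Prop := o = Outcome.L ∨ o = Outcome.P
def OB (o : Outcome) : Prop := o = Outcome.L ∨ o = Outcome.N

lemma lrOutcome_eq (S : Set ℕ) (hS : ∀ s ∈ S, 2 ≤ s) (n : ℕ) :
    lrOutcome S hS n =
      if ∃ s ∈ S, s ≤ n then
        fromOptions {o | ∃ s ∈ S, s ≤ n ∧ o = lrOutcome S hS (n - s)}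
      else (if Even n then Outcome.L else Outcome.R) := by
  have hset : {o | ∃ s, ∃ _ : s ∈ S, ∃ _ : s ≤ n, o = lrOutcome S hS (n - s)} =
      {o | ∃ s ∈ S, s ≤ n ∧ o = lrOutcome S hS (n - s)} := by
    ext o
    constructor
    · rintro ⟨s, hs, hsn, rfl⟩; exact ⟨s, hs, hsn, rfl⟩
    · rintro ⟨s, hs, hsn, rfl⟩; exact ⟨s, hs, hsn, rfl⟩
  show epOutcome S hS _ n = _
  unfold epOutcome
  rw [Nat.strongRecOn_eq]
  rw [← hset]
  rfl

lemma fromOptions_A {T : Set Outcome} (hne : T.Nonempty) :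
    OA (fromOptions T) ↔ ∀ o ∈ T, OB o := by
  unfold fromOptions
  split_ifs with h1 h2 h3
  · constructor
    · intro _ o ho
      have := h1.2 ho; simpa [OB] using this
    · intro _; exact Or.inl rfl
  · constructor
    · intro h; exact absurd h (by simp [OA])
    · intro hall; exact absurd (hall _ h2.1) (by simp [OB])
  · constructor
    · intro _ o ho
      rw [h3, Set.mem_singleton_iff] at ho; exact Or.inr ho
    · intro _; exact Or.inr rfl
  · constructor
    · intro h; exact absurd h (by simp [OA])
    · intro hall
      exfalso
      apply h1
      have hL : Outcome.L ∈ T := by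
        by_contra hL
        apply h3
        obtain ⟨o, ho⟩ := hne
        ext x
        simp only [Set.mem_singleton_iff]
        constructor
        · intro hx
          rcases hall x hx with h | h
          · exact absurd (h ▸ hx) hL
          · exact h
        · intro hx
          rcases hall o ho with h | h
          · exact absurd (h ▸ ho) hL
          · subst hx; exact h ▸ ho
      refine ⟨hL, fun x hx => ?_⟩
      rcases hall x hx with h | h <;> simp [h]

lemma fromOptions_B {T : Set Outcome} (hne : T.Nonempty) :
    OB (fromOptions T) ↔ ∃ o ∈ T, OA o := by
  unfold fromOptions
  split_ifs with h1 h2 h3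
  · exact ⟨fun _ => ⟨Outcome.L, h1.1, Or.inl rfl⟩, fun _ => Or.inl rfl⟩
  · constructor
    · intro h; exact absurd h (by simp [OB])
    · rintro ⟨o, ho, hA⟩
      have := h2.2 ho
      rcases hA with rfl | rfl <;> simp_all
  · constructor
    · intro h; exact absurd h (by simp [OB])
    · rintro ⟨o, ho, hA⟩
      rw [h3, Set.mem_singleton_iff] at ho
      rcases hA with rfl | rfl <;> simp_all
  · constructor
    · intro _
      by_contra hno
      push_neg at hno
      apply h2
      have hR : ∀ x ∈ T, x = Outcome.R ∨ x = Outcome.N := by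
        intro x hx
        have := hno x hx
        cases x <;> simp_all [OA]
      have : Outcome.R ∈ T := by
        by_contra hRm
        apply h3
        obtain ⟨o, ho⟩ := hne
        ext x
        simp only [Set.mem_singleton_iff]
        constructor
        · intro hx
          rcases hR x hx with h | h
          · exact absurd (h ▸ hx) hRm
          · exact h
        · intro hx
          rcases hR o ho with h | h
          · exact absurd (h ▸ ho) hRm
          · subst hx; exact h ▸ ho
      exact ⟨this, fun x hx => by rcases hR x hx with h | h <;> simp [h]⟩
    · intro _; exact Or.inr rfl

lemma lrOutcome_zero (S : Set ℕ) (hS : ∀ s ∈ S, 2 ≤ s) :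
    lrOutcome S hS 0 = Outcome.L := by
  rw [lrOutcome_eq]
  have h : ¬ ∃ s ∈ S, s ≤ 0 := by
    rintro ⟨s, hs, h⟩; have := hS s hs; omega
  rw [if_neg h]; simp

lemma key (S : Set ℕ) (hS : ∀ s ∈ S, 2 ≤ s) :
    ∀ n : ℕ, (¬ OB (lrOutcome S hS n) → OA (lrOutcome S hS (n + 1))) ∧
      (¬ OA (lrOutcome S hS n) → OB (lrOutcome S hS (n + 1))) := by
  intro n
  induction n using Nat.strong_induction_on with
  | _ n ih =>
  by_cases hterm : ∃ s ∈ S, s ≤ n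
  · obtain ⟨s0, hs0, hs0n⟩ := hterm
    have hterm : ∃ s ∈ S, s ≤ n := ⟨s0, hs0, hs0n⟩
    have hterm1 : ∃ s ∈ S, s ≤ n + 1 := ⟨s0, hs0, by omega⟩
    have hOn : lrOutcome S hS n =
        fromOptions {o | ∃ s ∈ S, s ≤ n ∧ o = lrOutcome S hS (n - s)} := by
      rw [lrOutcome_eq]; simp [hterm]
    have hOn1 : lrOutcome S hS (n + 1) =
        fromOptions {o | ∃ s ∈ S, s ≤ n + 1 ∧ o = lrOutcome S hS (n + 1 - s)} := by
      rw [lrOutcome_eq]; simp [hterm1]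
    have hne : {o | ∃ s ∈ S, s ≤ n ∧ o = lrOutcome S hS (n - s)}.Nonempty :=
      ⟨_, s0, hs0, hs0n, rfl⟩
    have hne1 : {o | ∃ s ∈ S, s ≤ n + 1 ∧ o = lrOutcome S hS (n + 1 - s)}.Nonempty :=
      ⟨_, s0, hs0, by omega, rfl⟩
    constructor
    · intro hB
      rw [hOn, fromOptions_B hne] at hB
      push_neg at hB
      rw [hOn1, fromOptions_A hne1]
      rintro o ⟨s, hs, hsn1, rfl⟩
      by_cases hsle : s ≤ n
      · have h1 : ¬ OA (lrOutcome S hS (n - s)) := hB _ ⟨s, hs, hsle, rfl⟩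
        have h2 := (ih (n - s) (by have := hS s hs; omega)).2 h1
        rwa [show n + 1 - s = (n - s) + 1 by omega]
      · rw [show n + 1 - s = 0 by omega, lrOutcome_zero]
        exact Or.inl rfl
    · intro hA
      rw [hOn, fromOptions_A hne] at hA
      push_neg at hA
      obtain ⟨o, ⟨s, hs, hsn, rfl⟩, hBo⟩ := hA
      have h1 := (ih (n - s) (by have := hS s hs; omega)).1 hBo
      rw [hOn1, fromOptions_B hne1]
      exact ⟨_, ⟨s, hs, by omega, by rw [show n + 1 - s = (n - s) + 1 by omega]⟩, h1⟩
  · have hOn : lrOutcome S hS n = if Even n then Outcome.L else Outcome.R := by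
      rw [lrOutcome_eq]; simp [hterm]
    by_cases hev : Even n
    · rw [hOn, if_pos hev]
      exact ⟨fun h => absurd (Or.inl rfl) h, fun h => absurd (Or.inl rfl) h⟩
    · suffices h : OA (lrOutcome S hS (n + 1)) ∧ OB (lrOutcome S hS (n + 1)) from
        ⟨fun _ => h.1, fun _ => h.2⟩
      by_cases hterm1 : ∃ s ∈ S, s ≤ n + 1
      · have hOn1 : lrOutcome S hS (n + 1) =
            fromOptions {o | ∃ s ∈ S, s ≤ n + 1 ∧ o = lrOutcome S hS (n + 1 - s)} := by
          rw [lrOutcome_eq]; simp [hterm1]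
        obtain ⟨s0, hs0, hs0n⟩ := hterm1
        have hne1 : {o | ∃ s ∈ S, s ≤ n + 1 ∧ o = lrOutcome S hS (n + 1 - s)}.Nonempty :=
          ⟨_, s0, hs0, hs0n, rfl⟩
        have hall : ∀ o ∈ {o | ∃ s ∈ S, s ≤ n + 1 ∧ o = lrOutcome S hS (n + 1 - s)},
            o = Outcome.L := by
          rintro o ⟨s, hs, hsn1, rfl⟩
          have hseq : s = n + 1 := by
            by_contra hne
            exact hterm ⟨s, hs, by omega⟩
          rw [show n + 1 - s = 0 by omega, lrOutcome_zero]
        constructor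
        · rw [hOn1, fromOptions_A hne1]
          intro o ho
          rw [hall o ho]; exact Or.inl rfl
        · rw [hOn1, fromOptions_B hne1]
          obtain ⟨o, ho⟩ := hne1
          exact ⟨o, ho, by rw [hall o ho]; exact Or.inl rfl⟩
      · have hOn1 : lrOutcome S hS (n + 1) =
            if Even (n + 1) then Outcome.L else Outcome.R := by
          rw [lrOutcome_eq]; simp [hterm1]
        have hev1 : Even (n + 1) := Nat.even_add_one.mpr hev
        rw [hOn1, if_pos hev1]
        exact ⟨Or.inl rfl, Or.inl rfl⟩

theorem stmt4 (S : Set ℕ) (hS : ∀ s ∈ S, 2 ≤ s) (n : ℕ)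
    (h : lrOutcome S hS n = Outcome.R) :
    (1 ≤ n → lrOutcome S hS (n - 1) = Outcome.L) ∧
    lrOutcome S hS (n + 1) = Outcome.L := by
  have hA : ¬ OA (lrOutcome S hS n) := by rw [h]; simp [OA]
  have hB : ¬ OB (lrOutcome S hS n) := by rw [h]; simp [OB]
  constructor
  · intro hn
    have k := key S hS (n - 1)
    rw [show n - 1 + 1 = n by omega] at k
    have hB' : OB (lrOutcome S hS (n - 1)) := by
      by_contra hb; exact hA (k.1 hb)
    have hA' : OA (lrOutcome S hS (n - 1)) := by
      by_contra ha; exact hB (k.2 ha)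
    rcases hA' with h' | h'
    · exact h'
    · rw [h'] at hB'; exact absurd hB' (by simp [OB])
  · have k := key S hS n
    have h1 := k.1 hB
    have h2 := k.2 hA
    rcases h1 with h' | h'
    · exact h'
    · rw [h'] at h2; exact absurd h2 (by simp [OB])
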